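/- arXiv:1006.3665 — 4 statements merged into one kernel-verified Lean document; each statement's English description precedes it below -/
import Mathlib

section
/- If (λ_n)_{n≥1} is a sequence of positive reals with λ_{2k-1} = c·(k − 3/4)^{2/3}·(1 + ε_k) and λ_{2k} = c·(k − 1/4)^{2/3}·(1 + δ_k) where c = (3π/2)^{2/3} and ε_k, δ_k → 0, then t^{3/2} · ∑_{n=1}^∞ e^{−λ_n t} → 1/√π as t → 0⁺. -/
open Real Filter Set MeasureTheory Topology

/-! Each parity class is a relative perturbation `1 + w k`, `w k → 0`, of a model sequence
`b (a + k) ^ p`. For the model, `x ↦ exp (-b x ^ p)` is decreasing, so its sum over `a + ℕ`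
differs from `∫₀^∞ exp (-b x ^ p) dx = b ^ (-1/p) Γ(1/p + 1)` by at most `a + 1`; rescaling
`b ↦ b t` gives `t ^ (1/p) ∑ exp (-b t (a + k) ^ p) → b ^ (-1/p) Γ(1/p + 1)`. Past a finite
head, which only contributes `O(t ^ (1/p))`, the perturbed sum lies between the model sums for
`(1 ± η) b`, and letting `η → 0` gives the same limit. For `p = 2/3` and `b = (3π/2) ^ (2/3)`
each parity class contributes `1 / (2 √π)`. -/

section IntegralTest

variable {f : ℝ → ℝ} {a : ℝ}

theorem AntitoneOn.sum_range_le_add_integral_Ioi (hf : AntitoneOn f (Ici a))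
    (hfi : IntegrableOn f (Ioi a)) (hf0 : ∀ x ∈ Ici a, 0 ≤ f x) (n : ℕ) :
    ∑ i ∈ Finset.range n, f (a + i) ≤ f a + ∫ x in Ioi a, f x := by
  have hI : 0 ≤ ∫ x in Ioi a, f x :=
    setIntegral_nonneg measurableSet_Ioi fun x hx => hf0 x (Ioi_subset_Ici_self hx)
  cases n with
  | zero => simpa using add_nonneg (hf0 a self_mem_Ici) hI
  | succ n =>
    rw [Finset.sum_range_succ', Nat.cast_zero, add_zero, add_comm]
    gcongr
    calc ∑ i ∈ Finset.range n, f (a + ↑(i + 1))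
        ≤ ∫ x in a..a + n, f x := (hf.mono Icc_subset_Ici_self).sum_le_integral
      _ ≤ ∫ x in Ioi a, f x := by
        rw [intervalIntegral.integral_of_le (by simp)]
        exact setIntegral_mono_set hfi
          (ae_restrict_of_forall_mem measurableSet_Ioi fun x hx => hf0 x (Ioi_subset_Ici_self hx))
          Ioc_subset_Ioi_self.eventuallyLE

theorem AntitoneOn.summable_comp_add (hf : AntitoneOn f (Ici a))
    (hfi : IntegrableOn f (Ioi a)) (hf0 : ∀ x ∈ Ici a, 0 ≤ f x) :
    Summable fun n : ℕ => f (a + n) :=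
  summable_of_sum_range_le (fun n => hf0 _ (by simp)) (hf.sum_range_le_add_integral_Ioi hfi hf0)

theorem AntitoneOn.tsum_comp_add_le_add_integral_Ioi (hf : AntitoneOn f (Ici a))
    (hfi : IntegrableOn f (Ioi a)) (hf0 : ∀ x ∈ Ici a, 0 ≤ f x) :
    ∑' n : ℕ, f (a + n) ≤ f a + ∫ x in Ioi a, f x :=
  tsum_le_of_sum_range_le (fun n => hf0 _ (by simp)) (hf.sum_range_le_add_integral_Ioi hfi hf0)

theorem AntitoneOn.integral_Ioi_le_tsum_comp_add (hf : AntitoneOn f (Ici a))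
    (hfi : IntegrableOn f (Ioi a)) (hf0 : ∀ x ∈ Ici a, 0 ≤ f x) :
    ∫ x in Ioi a, f x ≤ ∑' n : ℕ, f (a + n) := by
  have hs := hf.summable_comp_add hfi hf0
  refine le_of_tendsto_of_tendsto (intervalIntegral_tendsto_integral_Ioi a hfi
    (tendsto_atTop_add_const_left _ a tendsto_natCast_atTop_atTop)) hs.tendsto_sum_tsum_nat ?_
  filter_upwards with n
  exact (hf.mono Icc_subset_Ici_self).integral_le_sum

end IntegralTest

theorem tendsto_rpow_nhdsGT_zero {q : ℝ} (hq : 0 < q) :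
    Tendsto (fun t : ℝ => t ^ q) (𝓝[>] 0) (𝓝 0) :=
  ((continuous_rpow_const hq.le).tendsto' 0 0 (zero_rpow hq.ne')).mono_left nhdsWithin_le_nhds

theorem tendsto_of_forall_eventually_lt_of_lt {α β γ : Type*} [TopologicalSpace γ]
    [LinearOrder γ] [OrderTopology γ] {l : Filter α} {F : Filter β} [F.NeBot] {f : α → γ}
    {lo hi : β → γ} {L : γ} (hlo : Tendsto lo F (𝓝 L))
    (hhi : Tendsto hi F (𝓝 L))
    (hlower : ∀ᶠ η in F, ∀ ℓ < lo η, ∀ᶠ x in l, ℓ < f x)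
    (hupper : ∀ᶠ η in F, ∀ u > hi η, ∀ᶠ x in l, f x < u) :
    Tendsto f l (𝓝 L) := by
  rw [tendsto_order]
  constructor
  · intro ℓ hℓ
    obtain ⟨η, hℓη, hη⟩ := ((hlo.eventually (lt_mem_nhds hℓ)).and hlower).exists
    exact hη ℓ hℓη
  · intro u hu
    obtain ⟨η, hηu, hη⟩ := ((hhi.eventually (gt_mem_nhds hu)).and hupper).exists
    exact hη u hηu

theorem exists_forall_abs_comp_add_le {w : ℕ → ℝ} (hw : Tendsto w atTop (𝓝 0)) {η : ℝ}
    (hη : 0 < η) : ∃ N : ℕ, ∀ k, |w (k + N)| ≤ η := by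
  obtain ⟨N, hN⟩ := eventually_atTop.1 (hw.eventually (Metric.closedBall_mem_nhds 0 hη))
  exact ⟨N, fun k => by simpa using hN (k + N) (by omega)⟩

section StretchedExponential

variable {p a b : ℝ}

theorem antitoneOn_exp_neg_mul_rpow (hp : 0 ≤ p) (hb : 0 ≤ b) :
    AntitoneOn (fun x => exp (-b * x ^ p)) (Ici 0) := fun x hx _ _ hxy => by
  simp only [neg_mul, exp_le_exp, neg_le_neg_iff]
  gcongr

theorem integrableOn_exp_neg_mul_rpow (hp : 0 < p) (hb : 0 < b) :
    IntegrableOn (fun x => exp (-b * x ^ p)) (Ioi 0) := by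
  simpa using integrableOn_rpow_mul_exp_neg_mul_rpow neg_one_lt_zero hp hb

theorem summable_exp_neg_mul_rpow_add (hp : 0 < p) (hb : 0 < b) (ha : 0 ≤ a) :
    Summable fun k : ℕ => exp (-b * (a + k) ^ p) :=
  ((antitoneOn_exp_neg_mul_rpow hp.le hb.le).mono (Ici_subset_Ici.2 ha)).summable_comp_add
    ((integrableOn_exp_neg_mul_rpow hp hb).mono_set (Ioi_subset_Ioi ha))
    fun _ _ => (exp_pos _).le

theorem abs_tsum_exp_neg_mul_rpow_add_sub_le (hp : 0 < p) (hb : 0 < b) (ha : 0 ≤ a) :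
    |∑' k : ℕ, exp (-b * (a + k) ^ p) - b ^ (-1 / p) * Gamma (1 / p + 1)| ≤ a + 1 := by
  set f : ℝ → ℝ := fun x => exp (-b * x ^ p)
  have hf : AntitoneOn f (Ici a) :=
    (antitoneOn_exp_neg_mul_rpow hp.le hb.le).mono (Ici_subset_Ici.2 ha)
  have hfi : IntegrableOn f (Ioi a) :=
    (integrableOn_exp_neg_mul_rpow hp hb).mono_set (Ioi_subset_Ioi ha)
  have hf0 : ∀ x ∈ Ici a, 0 ≤ f x := fun _ _ => (exp_pos _).le
  have hf1 : ∀ x ∈ Ici 0, f x ≤ 1 := fun x (hx : 0 ≤ x) => by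
    simp only [f, exp_le_one_iff, neg_mul, neg_nonpos]
    positivity
  have hsplit :
      (∫ x in (0)..a, f x) + ∫ x in Ioi a, f x = b ^ (-1 / p) * Gamma (1 / p + 1) := by
    rw [intervalIntegral.integral_interval_add_Ioi (integrableOn_exp_neg_mul_rpow hp hb) hfi,
      integral_exp_neg_mul_rpow hp hb]
  have hhead_nonneg : 0 ≤ ∫ x in (0)..a, f x :=
    intervalIntegral.integral_nonneg ha fun _ _ => (exp_pos _).le
  have hhead_le : ∫ x in (0)..a, f x ≤ a := by
    have hfi₀ : IntervalIntegrable f volume 0 a :=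
      (intervalIntegrable_iff_integrableOn_Ioc_of_le ha).2
        ((integrableOn_exp_neg_mul_rpow hp hb).mono_set Ioc_subset_Ioi_self)
    calc ∫ x in (0)..a, f x ≤ ∫ _ in (0)..a, (1 : ℝ) :=
          intervalIntegral.integral_mono_on ha hfi₀ intervalIntegrable_const
            fun x hx => hf1 x hx.1
      _ = a := by simp
  have hupper := hf.tsum_comp_add_le_add_integral_Ioi hfi hf0
  have hlower := hf.integral_Ioi_le_tsum_comp_add hfi hf0
  rw [abs_le]
  constructor <;> linarith [hf1 a ha]

theorem tendsto_rpow_mul_tsum_exp_neg_mul_rpow_add (hp : 0 < p) (hb : 0 < b) (ha : 0 ≤ a) :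
    Tendsto (fun t => t ^ (1 / p) * ∑' k : ℕ, exp (-(b * t) * (a + k) ^ p)) (𝓝[>] 0)
      (𝓝 (b ^ (-1 / p) * Gamma (1 / p + 1))) := by
  have hpow : Tendsto (fun t : ℝ => t ^ (1 / p) * (a + 1)) (𝓝[>] 0) (𝓝 0) := by
    simpa using (tendsto_rpow_nhdsGT_zero (one_div_pos.2 hp)).mul_const (a + 1)
  refine tendsto_iff_norm_sub_tendsto_zero.2 (squeeze_zero_norm' ?_ hpow)
  filter_upwards [self_mem_nhdsWithin] with t (ht : 0 < t)
  have hscale : t ^ (1 / p) * (b * t) ^ (-1 / p) = b ^ (-1 / p) := by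
    rw [mul_rpow hb.le ht.le, mul_left_comm, ← rpow_add ht, ← add_div, add_neg_cancel,
      zero_div, rpow_zero, mul_one]
  rw [norm_norm, Real.norm_eq_abs, ← hscale, mul_assoc, ← mul_sub, abs_mul,
    abs_of_pos (rpow_pos_of_pos ht _)]
  exact mul_le_mul_of_nonneg_left (abs_tsum_exp_neg_mul_rpow_add_sub_le hp (mul_pos hb ht) ha)
    (rpow_nonneg ht.le _)

end StretchedExponential

section Perturbation

variable {p a b t η : ℝ} {w : ℕ → ℝ} {N : ℕ}

theorem exp_neg_mul_rpow_le_exp_neg_perturbed (hb : 0 ≤ b) (ht : 0 ≤ t) {x v : ℝ} (hx : 0 ≤ x)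
    (hv : |v| ≤ η) : exp (-((1 + η) * b * t) * x) ≤ exp (-(b * x * (1 + v)) * t) := by
  have := (abs_le.1 hv).2
  rw [exp_le_exp]
  have : 0 ≤ b * t * x := by positivity
  nlinarith

theorem exp_neg_perturbed_le_exp_neg_mul_rpow (hb : 0 ≤ b) (ht : 0 ≤ t) {x v : ℝ} (hx : 0 ≤ x)
    (hv : |v| ≤ η) : exp (-(b * x * (1 + v)) * t) ≤ exp (-((1 - η) * b * t) * x) := by
  have := (abs_le.1 hv).1
  rw [exp_le_exp]
  have : 0 ≤ b * t * x := by positivity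
  nlinarith

theorem summable_exp_neg_perturbed_of_abs_le (hp : 0 < p) (hb : 0 < b) (ha : 0 ≤ a) (ht : 0 < t)
    (hw : ∀ k, |w k| ≤ η) (hη : η < 1) :
    Summable fun k : ℕ => exp (-(b * (a + k) ^ p * (1 + w k)) * t) :=
  (summable_exp_neg_mul_rpow_add hp (by nlinarith [mul_pos hb ht]) ha).of_nonneg_of_le
    (fun _ => (exp_pos _).le)
    fun k => exp_neg_perturbed_le_exp_neg_mul_rpow hb.le ht.le (by positivity) (hw k)

theorem tsum_exp_neg_mul_rpow_add_le_tsum_perturbed (hp : 0 < p) (hb : 0 < b) (ha : 0 ≤ a)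
    (ht : 0 < t) (hw : ∀ k, |w k| ≤ η) (hη : η < 1) :
    ∑' k : ℕ, exp (-((1 + η) * b * t) * (a + k) ^ p) ≤
      ∑' k : ℕ, exp (-(b * (a + k) ^ p * (1 + w k)) * t) :=
  have hη₀ : 0 ≤ η := (abs_nonneg _).trans (hw 0)
  (summable_exp_neg_mul_rpow_add hp (by positivity) ha).tsum_le_tsum
    (fun k => exp_neg_mul_rpow_le_exp_neg_perturbed hb.le ht.le (by positivity) (hw k))
    (summable_exp_neg_perturbed_of_abs_le hp hb ha ht hw hη)

theorem tsum_exp_neg_perturbed_le_tsum_exp_neg_mul_rpow_add (hp : 0 < p) (hb : 0 < b)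
    (ha : 0 ≤ a) (ht : 0 < t) (hw : ∀ k, |w k| ≤ η) (hη : η < 1) :
    ∑' k : ℕ, exp (-(b * (a + k) ^ p * (1 + w k)) * t) ≤
      ∑' k : ℕ, exp (-((1 - η) * b * t) * (a + k) ^ p) :=
  (summable_exp_neg_perturbed_of_abs_le hp hb ha ht hw hη).tsum_le_tsum
    (fun k => exp_neg_perturbed_le_exp_neg_mul_rpow hb.le ht.le (by positivity) (hw k))
    (summable_exp_neg_mul_rpow_add hp (by nlinarith [mul_pos hb ht]) ha)

theorem exp_neg_perturbed_comp_add (N k : ℕ) :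
    exp (-(b * (a + ↑(k + N)) ^ p * (1 + w (k + N))) * t) =
      exp (-(b * (a + N + k) ^ p * (1 + w (k + N))) * t) := by
  push_cast
  ring_nf

theorem summable_exp_neg_perturbed_of_abs_comp_add_le (hp : 0 < p) (hb : 0 < b) (ha : 0 ≤ a)
    (ht : 0 < t) (hN : ∀ k, |w (k + N)| ≤ η) (hη : η < 1) :
    Summable fun k : ℕ => exp (-(b * (a + k) ^ p * (1 + w k)) * t) := by
  rw [← summable_nat_add_iff N]
  simp only [exp_neg_perturbed_comp_add N]
  exact summable_exp_neg_perturbed_of_abs_le hp hb (by positivity) ht hN hη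

theorem summable_exp_neg_perturbed (hp : 0 < p) (hb : 0 < b) (ha : 0 ≤ a) (ht : 0 < t)
    (hw : Tendsto w atTop (𝓝 0)) :
    Summable fun k : ℕ => exp (-(b * (a + k) ^ p * (1 + w k)) * t) :=
  have ⟨_, hN⟩ := exists_forall_abs_comp_add_le hw one_half_pos
  summable_exp_neg_perturbed_of_abs_comp_add_le hp hb ha ht hN one_half_lt_one

theorem tsum_exp_neg_perturbed_eq_sum_range_add (hp : 0 < p) (hb : 0 < b) (ha : 0 ≤ a)
    (ht : 0 < t) (hN : ∀ k, |w (k + N)| ≤ η) (hη : η < 1) :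
    ∑' k : ℕ, exp (-(b * (a + k) ^ p * (1 + w k)) * t) =
      ∑ k ∈ Finset.range N, exp (-(b * (a + k) ^ p * (1 + w k)) * t) +
        ∑' k : ℕ, exp (-(b * (a + N + k) ^ p * (1 + w (k + N))) * t) := by
  rw [← (summable_exp_neg_perturbed_of_abs_comp_add_le hp hb ha ht hN hη).sum_add_tsum_nat_add N]
  simp only [exp_neg_perturbed_comp_add N]

theorem eventually_lt_rpow_mul_tsum_exp_neg_perturbed (hp : 0 < p) (hb : 0 < b) (ha : 0 ≤ a)
    (hN : ∀ k, |w (k + N)| ≤ η) (hη : η < 1) {ℓ : ℝ}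
    (hℓ : ℓ < ((1 + η) * b) ^ (-1 / p) * Gamma (1 / p + 1)) :
    ∀ᶠ t in 𝓝[>] 0,
      ℓ < t ^ (1 / p) * ∑' k : ℕ, exp (-(b * (a + k) ^ p * (1 + w k)) * t) := by
  have hη₀ : 0 ≤ η := (abs_nonneg _).trans (hN 0)
  filter_upwards [self_mem_nhdsWithin, (tendsto_rpow_mul_tsum_exp_neg_mul_rpow_add hp
    (by positivity : 0 < (1 + η) * b) (by positivity : 0 ≤ a + N)).eventually
    (lt_mem_nhds hℓ)] with t (ht : 0 < t) hlt
  calc ℓ < t ^ (1 / p) * ∑' k : ℕ, exp (-((1 + η) * b * t) * (a + N + k) ^ p) := hlt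
    _ ≤ t ^ (1 / p) * ∑' k : ℕ, exp (-(b * (a + N + k) ^ p * (1 + w (k + N))) * t) :=
      mul_le_mul_of_nonneg_left
        (tsum_exp_neg_mul_rpow_add_le_tsum_perturbed hp hb (by positivity) ht hN hη)
        (rpow_nonneg ht.le _)
    _ ≤ t ^ (1 / p) * ∑' k : ℕ, exp (-(b * (a + k) ^ p * (1 + w k)) * t) := by
      rw [tsum_exp_neg_perturbed_eq_sum_range_add hp hb ha ht hN hη]
      gcongr
      exact le_add_of_nonneg_left (Finset.sum_nonneg fun _ _ => (exp_pos _).le)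

theorem eventually_rpow_mul_tsum_exp_neg_perturbed_lt (hp : 0 < p) (hb : 0 < b) (ha : 0 ≤ a)
    (hN : ∀ k, |w (k + N)| ≤ η) (hη : η < 1) {u : ℝ}
    (hu : ((1 - η) * b) ^ (-1 / p) * Gamma (1 / p + 1) < u) :
    ∀ᶠ t in 𝓝[>] 0,
      t ^ (1 / p) * ∑' k : ℕ, exp (-(b * (a + k) ^ p * (1 + w k)) * t) < u := by
  have hhead : Tendsto (fun t => t ^ (1 / p) *
      ∑ k ∈ Finset.range N, exp (-(b * (a + k) ^ p * (1 + w k)) * t)) (𝓝[>] 0) (𝓝 0) := by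
    have hcont : Continuous fun t =>
        ∑ k ∈ Finset.range N, exp (-(b * (a + k) ^ p * (1 + w k)) * t) := by
      fun_prop
    simpa using (tendsto_rpow_nhdsGT_zero (one_div_pos.2 hp)).mul
      ((hcont.tendsto 0).mono_left nhdsWithin_le_nhds)
  filter_upwards [self_mem_nhdsWithin, (hhead.add (tendsto_rpow_mul_tsum_exp_neg_mul_rpow_add hp
    (by nlinarith : 0 < (1 - η) * b) (by positivity : 0 ≤ a + N))).eventually
    (gt_mem_nhds (by simpa using hu))] with t (ht : 0 < t) hlt
  calc t ^ (1 / p) * ∑' k : ℕ, exp (-(b * (a + k) ^ p * (1 + w k)) * t)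
    _ ≤ t ^ (1 / p) * ∑ k ∈ Finset.range N, exp (-(b * (a + k) ^ p * (1 + w k)) * t) +
          t ^ (1 / p) * ∑' k : ℕ, exp (-((1 - η) * b * t) * (a + N + k) ^ p) := by
      rw [tsum_exp_neg_perturbed_eq_sum_range_add hp hb ha ht hN hη, mul_add]
      exact add_le_add_right (mul_le_mul_of_nonneg_left
        (tsum_exp_neg_perturbed_le_tsum_exp_neg_mul_rpow_add hp hb (by positivity) ht hN hη)
        (rpow_nonneg ht.le _)) _
    _ < u := hlt

theorem tendsto_rpow_mul_tsum_exp_neg_perturbed (hp : 0 < p) (hb : 0 < b) (ha : 0 ≤ a)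
    (hw : Tendsto w atTop (𝓝 0)) :
    Tendsto (fun t => t ^ (1 / p) * ∑' k : ℕ, exp (-(b * (a + k) ^ p * (1 + w k)) * t))
      (𝓝[>] 0) (𝓝 (b ^ (-1 / p) * Gamma (1 / p + 1))) := by
  have hlim : ∀ σ : ℝ, Tendsto (fun η => ((1 + σ * η) * b) ^ (-1 / p) * Gamma (1 / p + 1))
      (𝓝[>] 0) (𝓝 (b ^ (-1 / p) * Gamma (1 / p + 1))) := fun σ => by
    have hcont :
        ContinuousAt (fun η : ℝ => ((1 + σ * η) * b) ^ (-1 / p) * Gamma (1 / p + 1)) 0 :=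
      ((continuousAt_const.add (continuousAt_const.mul continuousAt_id)).mul
        continuousAt_const).rpow_const (Or.inl (by simpa using hb.ne')) |>.mul continuousAt_const
    simpa using hcont.tendsto.mono_left nhdsWithin_le_nhds
  have hN : ∀ᶠ η in 𝓝[>] (0 : ℝ), η < 1 ∧ ∃ N : ℕ, ∀ k, |w (k + N)| ≤ η := by
    filter_upwards [Ioo_mem_nhdsGT one_pos] with η hη
    exact ⟨hη.2, exists_forall_abs_comp_add_le hw hη.1⟩
  refine tendsto_of_forall_eventually_lt_of_lt
    (lo := fun η => ((1 + η) * b) ^ (-1 / p) * Gamma (1 / p + 1))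
    (hi := fun η => ((1 - η) * b) ^ (-1 / p) * Gamma (1 / p + 1))
    (by simpa using hlim 1) (by simpa [sub_eq_add_neg] using hlim (-1)) ?_ ?_
  · filter_upwards [hN] with η ⟨hη, N, hN⟩ ℓ hℓ
    exact eventually_lt_rpow_mul_tsum_exp_neg_perturbed hp hb ha hN hη hℓ
  · filter_upwards [hN] with η ⟨hη, N, hN⟩ u hu
    exact eventually_rpow_mul_tsum_exp_neg_perturbed_lt hp hb ha hN hη hu

end Perturbation

theorem Gamma_five_halves : Gamma (5 / 2) = 3 * √π / 4 := by
  have := Gamma_nat_add_half 2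
  norm_num [Nat.doubleFactorial] at this
  rw [← this]

theorem three_pi_div_two_rpow_mul_Gamma_five_halves :
    ((3 * π / 2) ^ ((2 : ℝ) / 3)) ^ (-(3 : ℝ) / 2) * Gamma (5 / 2) = 1 / (2 * √π) := by
  rw [← rpow_mul (by positivity), show (2 : ℝ) / 3 * (-3 / 2) = -1 by norm_num, rpow_neg_one,
    Gamma_five_halves]
  field_simp
  linear_combination 4 * sq_sqrt pi_pos.le

theorem tendsto_rpow_three_halves_mul_tsum_exp_neg_perturbed {a : ℝ} {w : ℕ → ℝ}
    (ha : 0 ≤ a) (hw : Tendsto w atTop (𝓝 0)) :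
    Tendsto (fun t => t ^ ((3 : ℝ) / 2) * ∑' k : ℕ,
        exp (-((3 * π / 2) ^ ((2 : ℝ) / 3) * (a + k) ^ ((2 : ℝ) / 3) * (1 + w k)) * t))
      (𝓝[>] 0) (𝓝 (1 / (2 * √π))) := by
  rw [← three_pi_div_two_rpow_mul_Gamma_five_halves]
  convert tendsto_rpow_mul_tsum_exp_neg_perturbed (by norm_num : (0 : ℝ) < 2 / 3)
    (by positivity : 0 < (3 * π / 2) ^ ((2 : ℝ) / 3)) ha hw using 3 <;> norm_num

theorem trace_asymptotics_general (lam ε δ : ℕ → ℝ)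
    (hε : Filter.Tendsto ε atTop (nhds 0))
    (hδ : Filter.Tendsto δ atTop (nhds 0))
    (hodd : ∀ k ≥ 1, lam (2 * k - 1) =
      (3 * π / 2) ^ ((2 : ℝ) / 3) * ((k : ℝ) - 3 / 4) ^ ((2 : ℝ) / 3) * (1 + ε k))
    (heven : ∀ k ≥ 1, lam (2 * k) =
      (3 * π / 2) ^ ((2 : ℝ) / 3) * ((k : ℝ) - 1 / 4) ^ ((2 : ℝ) / 3) * (1 + δ k)) :
    Filter.Tendsto (fun t : ℝ => t ^ ((3 : ℝ) / 2) * ∑' n : ℕ, Real.exp (-lam (n + 1) * t))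
      (nhdsWithin 0 (Ioi 0)) (nhds (1 / Real.sqrt π)) := by
  set c : ℝ := (3 * π / 2) ^ ((2 : ℝ) / 3)
  have hodd' (k : ℕ) :
      lam (2 * k + 1) = c * (1 / 4 + k) ^ ((2 : ℝ) / 3) * (1 + ε (k + 1)) := by
    rw [show 2 * k + 1 = 2 * (k + 1) - 1 by omega, hodd (k + 1) (by omega)]
    push_cast
    ring_nf
  have heven' (k : ℕ) :
      lam (2 * k + 1 + 1) = c * (3 / 4 + k) ^ ((2 : ℝ) / 3) * (1 + δ (k + 1)) := by
    rw [show 2 * k + 1 + 1 = 2 * (k + 1) by omega, heven (k + 1) (by omega)]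
    push_cast
    ring_nf
  have hε' : Tendsto (fun k => ε (k + 1)) atTop (𝓝 0) := hε.comp (tendsto_add_atTop_nat 1)
  have hδ' : Tendsto (fun k => δ (k + 1)) atTop (𝓝 0) := hδ.comp (tendsto_add_atTop_nat 1)
  rw [show 1 / √π = 1 / (2 * √π) + 1 / (2 * √π) by ring]
  have hodd_lim :=
    tendsto_rpow_three_halves_mul_tsum_exp_neg_perturbed (a := 1 / 4) (by norm_num) hε'
  have heven_lim :=
    tendsto_rpow_three_halves_mul_tsum_exp_neg_perturbed (a := 3 / 4) (by norm_num) hδ'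
  refine (hodd_lim.add heven_lim).congr' ?_
  filter_upwards [self_mem_nhdsWithin] with t (ht : 0 < t)
  have hodd_sum : HasSum (fun k => exp (-lam (2 * k + 1) * t))
      (∑' k : ℕ, exp (-(c * (1 / 4 + k) ^ ((2 : ℝ) / 3) * (1 + ε (k + 1))) * t)) := by
    simpa only [hodd'] using
      (summable_exp_neg_perturbed (by norm_num) (by positivity) (by norm_num) ht hε').hasSum
  have heven_sum : HasSum (fun k => exp (-lam (2 * k + 1 + 1) * t))
      (∑' k : ℕ, exp (-(c * (3 / 4 + k) ^ ((2 : ℝ) / 3) * (1 + δ (k + 1))) * t)) := by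
    simpa only [heven'] using
      (summable_exp_neg_perturbed (by norm_num) (by positivity) (by norm_num) ht hδ').hasSum
  rw [(HasSum.even_add_odd (f := fun n => exp (-lam (n + 1) * t)) hodd_sum heven_sum).tsum_eq,
    mul_add]

theorem trace_asymptotics (lam ε δ : ℕ → ℝ)
    (hpos : ∀ n ≥ 1, 0 < lam n)
    (hε : Filter.Tendsto ε atTop (nhds 0))
    (hδ : Filter.Tendsto δ atTop (nhds 0))
    (hodd : ∀ k ≥ 1, lam (2 * k - 1) =
      (3 * π / 2) ^ ((2 : ℝ) / 3) * ((k : ℝ) - 3 / 4) ^ ((2 : ℝ) / 3) * (1 + ε k))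
    (heven : ∀ k ≥ 1, lam (2 * k) =
      (3 * π / 2) ^ ((2 : ℝ) / 3) * ((k : ℝ) - 1 / 4) ^ ((2 : ℝ) / 3) * (1 + δ k))
    (hsum : ∀ t > 0, Summable (fun n : ℕ => Real.exp (-lam (n + 1) * t))) :
    Filter.Tendsto (fun t : ℝ => t ^ ((3 : ℝ) / 2) * ∑' n : ℕ, Real.exp (-lam (n + 1) * t))
      (nhdsWithin 0 (Ioi 0)) (nhds (1 / Real.sqrt π)) :=
  trace_asymptotics_general lam ε δ hε hδ hodd heven
end

section
/- Let y : ℝ → ℝ be continuous, twice continuously differentiable on (0,∞) and on (−∞,0), even (y(−x) = y(x)), satisfying −y''(x) + |x|·y(x) = λ·y(x) for all x ≠ 0, and with right derivative at 0 equal to 0. If moreover y restricted to (0,∞) is of the form y(x) = c₁·A(x−λ) + c₂·B(x−λ) where A, B are two solutions of the Airy equation f'' = z f with B unbounded and A → 0 at +∞, and y ∈ L¹(ℝ), y not identically 0, then c₂ = 0 and A'(−λ) = 0. -/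
/-! Since `A → 0` and `B → ∞`, a nonzero `c₂` would make `|y| → ∞`, which is incompatible with
`y ∈ L¹`; so `c₂ = 0`. By continuity the formula for `y` also holds at `0`, so the vanishing right
derivative there reads `c₁ A'(-λ) = 0`, and `c₁ ≠ 0` because an even function vanishing on
`[0, ∞)` vanishes identically. -/

open Real Filter Set MeasureTheory

open scoped Topology

theorem not_tendsto_norm_atTop_of_integrableOn_Ioi {E : Type*} [NormedAddCommGroup E]
    {f : ℝ → E} {a : ℝ} (hf : IntegrableOn f (Ioi a)) :
    ¬Tendsto (fun x ↦ ‖f x‖) atTop atTop := by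
  intro hlim
  obtain ⟨N, hN⟩ := eventually_atTop.1 ((hlim.eventually_ge_atTop 1).and (eventually_gt_atTop a))
  have hone : IntegrableOn (fun _ ↦ (1 : ℝ)) (Ici N) := by
    refine (hf.mono_set (Ici_subset_Ioi.2 (hN N le_rfl).2)).norm.mono' (by fun_prop) ?_
    filter_upwards [ae_restrict_mem measurableSet_Ici] with x hx
    simpa using (hN x hx).1
  rw [integrableOn_const_iff, enorm_one, Real.volume_Ici] at hone
  simp at hone

theorem tendsto_abs_add_mul_atTop {α : Type*} {l : Filter α} {a b : α → ℝ} {c₁ c₂ : ℝ}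
    (ha : Tendsto a l (𝓝 0)) (hb : Tendsto b l atTop) (hc₂ : c₂ ≠ 0) :
    Tendsto (fun x ↦ |c₁ * a x + c₂ * b x|) l atTop := by
  have ha' := ha.const_mul c₁
  rcases hc₂.lt_or_gt with hneg | hpos
  · exact tendsto_abs_atBot_atTop.comp (ha'.add_atBot (hb.const_mul_atTop_of_neg hneg))
  · exact tendsto_abs_atTop_atTop.comp (ha'.add_atTop (hb.const_mul_atTop hpos))

theorem eq_zero_of_even_of_eqOn_Ici {M : Type*} [Zero M] {f : ℝ → M}
    (hf : ∀ x, f (-x) = f x) (h : EqOn f 0 (Ici 0)) : f = 0 := by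
  funext x
  rcases le_total 0 x with hx | hx
  · exact h hx
  · rw [← hf]
    exact h (neg_nonneg.2 hx)

theorem even_eigenfunction_characterization_general
    (A A' B B' : ℝ → ℝ)
    (hA : ∀ z, HasDerivAt A (A' z) z)
    (hB : ∀ z, HasDerivAt B (B' z) z)
    (hAtop : Filter.Tendsto A atTop (nhds 0))
    (hBtop : Filter.Tendsto B atTop atTop)
    (lam : ℝ)
    (y : ℝ → ℝ) (c₁ c₂ : ℝ)
    (hycont : Continuous y)
    (hyeven : ∀ x, y (-x) = y x)
    (hyderiv0 : derivWithin y (Ici 0) 0 = 0)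
    (hyform : ∀ x > 0, y x = c₁ * A (x - lam) + c₂ * B (x - lam))
    (hyL1 : Integrable y)
    (hynz : y ≠ 0) :
    c₂ = 0 ∧ A' (-lam) = 0 := by
  set g : ℝ → ℝ := fun x ↦ c₁ * A (x - lam) + c₂ * B (x - lam)
  have hg : ∀ x, HasDerivAt g (c₁ * A' (x - lam) + c₂ * B' (x - lam)) x := fun x ↦
    (((hA _).comp_sub_const x lam).const_mul c₁).add (((hB _).comp_sub_const x lam).const_mul c₂)
  have hyg : EqOn y g (Ici 0) := by
    rw [← closure_Ioi]
    exact EqOn.closure hyform hycont (continuous_iff_continuousAt.2 fun x ↦ (hg x).continuousAt)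
  have hshift : Tendsto (fun x : ℝ ↦ x - lam) atTop atTop :=
    tendsto_atTop_add_const_right _ _ tendsto_id
  have hc₂ : c₂ = 0 := by
    by_contra hc₂
    refine not_tendsto_norm_atTop_of_integrableOn_Ioi ((hyL1.integrableOn (s := Ioi 0)).congr_fun
      hyform measurableSet_Ioi) ?_
    simpa only [Real.norm_eq_abs, Function.comp_apply] using
      tendsto_abs_add_mul_atTop (hAtop.comp hshift) (hBtop.comp hshift) hc₂
  have hc₁ : c₁ ≠ 0 := by
    rintro rfl
    exact hynz (eq_zero_of_even_of_eqOn_Ici hyeven fun x hx ↦ by simp [hyg hx, g, hc₂])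
  have hderiv : derivWithin y (Ici 0) 0 = c₁ * A' (-lam) + c₂ * B' (-lam) := by
    rw [derivWithin_congr hyg (hyg self_mem_Ici),
      ((hg 0).hasDerivWithinAt.derivWithin (uniqueDiffWithinAt_Ici 0)), zero_sub]
  refine ⟨hc₂, ?_⟩
  rw [hyderiv0, hc₂, zero_mul, add_zero] at hderiv
  exact (mul_eq_zero.1 hderiv.symm).resolve_left hc₁

theorem even_eigenfunction_characterization
    (A A' B B' : ℝ → ℝ)
    (hA : ∀ z, HasDerivAt A (A' z) z) (hA' : ∀ z, HasDerivAt A' (z * A z) z)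
    (hB : ∀ z, HasDerivAt B (B' z) z) (hB' : ∀ z, HasDerivAt B' (z * B z) z)
    (hAtop : Filter.Tendsto A atTop (nhds 0))
    (hAint : IntegrableOn A (Ici 0))
    (hBtop : Filter.Tendsto B atTop atTop)
    (lam : ℝ) (hlam : 0 < lam)
    (y : ℝ → ℝ) (c₁ c₂ : ℝ)
    (hycont : Continuous y)
    (hyC2 : ContDiffOn ℝ 2 y (Ioi 0) ∧ ContDiffOn ℝ 2 y (Iio 0))
    (hyeven : ∀ x, y (-x) = y x)
    (hyeq : ∀ x ≠ 0, -(deriv (deriv y)) x + |x| * y x = lam * y x)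
    (hyderiv0 : derivWithin y (Ici 0) 0 = 0)
    (hyform : ∀ x > 0, y x = c₁ * A (x - lam) + c₂ * B (x - lam))
    (hyL1 : Integrable y)
    (hynz : y ≠ 0) :
    c₂ = 0 ∧ A' (-lam) = 0 :=
  even_eigenfunction_characterization_general A A' B B' hA hB hAtop hBtop lam y c₁ c₂ hycont hyeven
    hyderiv0 hyform hyL1 hynz
end

section
/- Let A : ℝ → ℝ solve A'' = id·A with A, A' → 0 at +∞ and A integrable together with its derivatives on half-lines [r,∞). Fix a < 0 with A'(a) = 0. Then for every z ≠ 0 and every N ≥ 1, ∫_0^∞ A(u+a)·cos(zu) du = ∑_{s=1}^{N} (−1)^s z^{−2s} A^{(2s−1)}(a) + R_N(z), where |R_N(z)| ≤ C_N · |z|^{−2N−2} with C_N = |A^{(2N+1)}(a)| + ∫_0^∞ |A^{(2N+2)}(u+a)| du. -/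
open Real Filter Set MeasureTheory Finset

theorem airy_cosine_expansion
    (A : ℝ → ℝ) (hA : ContDiff ℝ (⊤ : ℕ∞) A)
    (hAiry : ∀ z, iteratedDeriv 2 A z = z * A z)
    (hdecay : ∀ n : ℕ, Filter.Tendsto (iteratedDeriv n A) atTop (nhds 0))
    (hint : ∀ (n : ℕ) (r : ℝ), IntegrableOn (iteratedDeriv n A) (Ici r))
    (a : ℝ) (ha : a < 0) (ha' : iteratedDeriv 1 A a = 0) :
    ∀ z : ℝ, z ≠ 0 → ∀ N : ℕ, 1 ≤ N →
      ∃ R : ℝ,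
        (∫ u in Ioi (0 : ℝ), A (u + a) * Real.cos (z * u)) =
          (∑ s ∈ Finset.Icc 1 N, (-1 : ℝ) ^ s / z ^ (2 * s) * iteratedDeriv (2 * s - 1) A a)
            + R ∧
        |R| ≤ (|iteratedDeriv (2 * N + 1) A a| +
            ∫ u in Ioi (0 : ℝ), |iteratedDeriv (2 * N + 2) A (u + a)|) / |z| ^ (2 * N + 2) := by
  intro z hz N hN
  -- smoothness facts
  have hder : ∀ (n : ℕ) (x : ℝ), HasDerivAt (iteratedDeriv n A) (iteratedDeriv (n+1) A x) x := by
    intro n x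
    rw [iteratedDeriv_succ]
    exact ((hA.differentiable_iteratedDeriv n (by exact_mod_cast ENat.coe_lt_top n)) x).hasDerivAt
  set F : ℕ → ℝ → ℝ := fun n u => iteratedDeriv n A (u + a) with hF
  have hFd : ∀ (n : ℕ) (x : ℝ), HasDerivAt (F n) (F (n+1) x) x := by
    intro n x
    have h1 : HasDerivAt (fun u : ℝ => u + a) 1 x := (hasDerivAt_id x).add_const a
    simpa [hF, Function.comp_def] using (hder n (x+a)).comp x h1
  have hFc : ∀ n, Continuous (F n) :=
    fun n => (hA.continuous_iteratedDeriv n (by exact_mod_cast le_top)).comp (continuous_id.add continuous_const)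
  have hFtop : ∀ n, Tendsto (F n) atTop (nhds 0) := fun n =>
    (hdecay n).comp (tendsto_atTop_add_const_right _ a tendsto_id)
  have hFint : ∀ n, IntegrableOn (F n) (Ioi 0) := by
    intro n
    have h1 : Integrable ((Set.Ioi a).indicator (iteratedDeriv n A)) :=
      (integrable_indicator_iff measurableSet_Ioi).2 ((hint n a).mono_set Ioi_subset_Ici_self)
    have h2 := h1.comp_add_right a
    have h3 : (fun u => (Set.Ioi a).indicator (iteratedDeriv n A) (u + a))
        = (Set.Ioi 0).indicator (F n) := by
      ext u
      by_cases hu : u ∈ Set.Ioi (0:ℝ)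
      · rw [indicator_of_mem hu]
        have hmem : u + a ∈ Ioi a := by simp only [Set.mem_Ioi] at hu ⊢; linarith
        rw [indicator_of_mem hmem]
      · rw [indicator_of_notMem hu, indicator_of_notMem]
        simp only [Set.mem_Ioi, not_lt] at hu ⊢; linarith
    rw [h3] at h2
    exact (integrable_indicator_iff measurableSet_Ioi).1 h2
  have hmul : ∀ (n : ℕ) (g : ℝ → ℝ), Continuous g → (∀ u, |g u| ≤ 1) →
      IntegrableOn (fun u => F n u * g u) (Ioi 0) := by
    intro n g hg hgb
    refine MeasureTheory.Integrable.mono (hFint n) (((hFc n).mul hg).aestronglyMeasurable) ?_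
    refine ae_of_all _ fun u => ?_
    simp only [norm_mul, Real.norm_eq_abs]
    exact mul_le_of_le_one_right (abs_nonneg _) (hgb u)
  have hcosC : Continuous fun u : ℝ => Real.cos (z * u) :=
    Real.continuous_cos.comp (continuous_const.mul continuous_id)
  have hsinC : Continuous fun u : ℝ => Real.sin (z * u) :=
    Real.continuous_sin.comp (continuous_const.mul continuous_id)
  have hintC : ∀ n, IntegrableOn (fun u => F n u * Real.cos (z*u)) (Ioi 0) :=
    fun n => hmul n _ hcosC (fun u => Real.abs_cos_le_one _)
  have hintS : ∀ n, IntegrableOn (fun u => F n u * Real.sin (z*u)) (Ioi 0) :=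
    fun n => hmul n _ hsinC (fun u => Real.abs_sin_le_one _)
  set Ci : ℕ → ℝ := fun n => ∫ u in Ioi (0:ℝ), F n u * Real.cos (z * u) with hCi
  set Si : ℕ → ℝ := fun n => ∫ u in Ioi (0:ℝ), F n u * Real.sin (z * u) with hSi
  -- integration by parts: sin version
  have hS : ∀ n, Si (n+1) = -z * Ci n := by
    intro n
    have hderiv : ∀ x ∈ Ici (0:ℝ), HasDerivAt (fun u => F n u * Real.sin (z*u))
        (F (n+1) x * Real.sin (z*x) + z * (F n x * Real.cos (z*x))) x := by
      intro x _
      have h1 : HasDerivAt (fun u : ℝ => Real.sin (z*u)) (Real.cos (z*x) * z) x := by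
        simpa [Function.comp_def] using (Real.hasDerivAt_sin (z*x)).comp x ((hasDerivAt_id x).const_mul z)
      have h2 : HasDerivAt (fun u => F n u * Real.sin (z*u)) _ x := (hFd n x).mul h1
      convert h2 using 1
      ring
    have f'int : IntegrableOn (fun x => F (n+1) x * Real.sin (z*x)
        + z * (F n x * Real.cos (z*x))) (Ioi 0) :=
      (hintS (n+1)).add ((hintC n).const_mul z)
    have htend : Tendsto (fun u => F n u * Real.sin (z*u)) atTop (nhds 0) := by
      rw [tendsto_zero_iff_norm_tendsto_zero]
      refine squeeze_zero (fun u => norm_nonneg _) (fun u => ?_) (by simpa using (hFtop n).abs)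
      simp only [Real.norm_eq_abs, abs_mul]
      exact mul_le_of_le_one_right (abs_nonneg _) (Real.abs_sin_le_one _)
    have heq := integral_Ioi_of_hasDerivAt_of_tendsto' hderiv f'int htend
    rw [integral_add (hintS (n+1)) ((hintC n).const_mul z), integral_const_mul] at heq
    simp only [mul_zero, Real.sin_zero, mul_zero, zero_sub, neg_zero] at heq
    have : Si (n+1) + z * Ci n = 0 := heq
    linarith
  -- integration by parts: cos version
  have hC : ∀ n, Ci (n+1) = z * Si n - iteratedDeriv n A a := by
    intro n
    have hderiv : ∀ x ∈ Ici (0:ℝ), HasDerivAt (fun u => F n u * Real.cos (z*u))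
        (F (n+1) x * Real.cos (z*x) + (-z) * (F n x * Real.sin (z*x))) x := by
      intro x _
      have h1 : HasDerivAt (fun u : ℝ => Real.cos (z*u)) (-Real.sin (z*x) * z) x := by
        simpa [Function.comp_def] using (Real.hasDerivAt_cos (z*x)).comp x ((hasDerivAt_id x).const_mul z)
      have h2 : HasDerivAt (fun u => F n u * Real.cos (z*u)) _ x := (hFd n x).mul h1
      convert h2 using 1
      ring
    have f'int : IntegrableOn (fun x => F (n+1) x * Real.cos (z*x)
        + (-z) * (F n x * Real.sin (z*x))) (Ioi 0) :=
      (hintC (n+1)).add ((hintS n).const_mul (-z))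
    have htend : Tendsto (fun u => F n u * Real.cos (z*u)) atTop (nhds 0) := by
      rw [tendsto_zero_iff_norm_tendsto_zero]
      refine squeeze_zero (fun u => norm_nonneg _) (fun u => ?_) (by simpa using (hFtop n).abs)
      simp only [Real.norm_eq_abs, abs_mul]
      exact mul_le_of_le_one_right (abs_nonneg _) (Real.abs_cos_le_one _)
    have heq := integral_Ioi_of_hasDerivAt_of_tendsto' hderiv f'int htend
    rw [integral_add (hintC (n+1)) ((hintS n).const_mul (-z)), integral_const_mul] at heq
    simp only [mul_zero, Real.cos_zero, mul_one, zero_sub] at heq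
    have hF0 : F n 0 = iteratedDeriv n A a := by simp [hF]
    have : Ci (n+1) + (-z) * Si n = -(iteratedDeriv n A a) := by
      rw [← hF0]; exact heq
    linarith
  -- recursion
  have hrec : ∀ n, Ci (n+2) = -(iteratedDeriv (n+1) A a) - z^2 * Ci n := by
    intro n
    have h1 := hC (n+1)
    rw [hS n] at h1
    rw [h1]; ring
  -- main induction
  have hmain : ∀ M : ℕ, Ci 0 =
      (∑ s ∈ Finset.Icc 1 M, (-1:ℝ)^s / z^(2*s) * iteratedDeriv (2*s-1) A a)
        + (-1:ℝ)^M / z^(2*M) * Ci (2*M) := by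
    intro M
    induction M with
    | zero => simp
    | succ M ih =>
      have hr := hrec (2*M)
      have h2 : 2*(M+1) = 2*M+2 := by ring
      have h3 : 2*(M+1)-1 = 2*M+1 := by omega
      rw [Finset.sum_Icc_succ_top (by omega : 1 ≤ M+1), h3, h2, hr, ih]
      have hzpow : z^(2*M) ≠ 0 := pow_ne_zero _ hz
      field_simp
      ring
  refine ⟨(-1:ℝ)^N / z^(2*N) * Ci (2*N), ?_, ?_⟩
  · have h0 : (∫ u in Ioi (0:ℝ), A (u+a) * Real.cos (z*u)) = Ci 0 := by
      simp [hCi, hF, iteratedDeriv_zero]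
    rw [h0]; exact hmain N
  · -- the bound
    have hr := hrec (2*N)
    have hCb : |Ci (2*N+2)| ≤ ∫ u in Ioi (0:ℝ), |iteratedDeriv (2*N+2) A (u+a)| := by
      have h1 : |Ci (2*N+2)| ≤ ∫ u in Ioi (0:ℝ), |F (2*N+2) u * Real.cos (z*u)| := by
        have := norm_integral_le_integral_norm (μ := volume.restrict (Set.Ioi (0:ℝ)))
            (f := fun u => F (2*N+2) u * Real.cos (z*u))
        simp only [Real.norm_eq_abs] at this
        exact this
      refine h1.trans ?_
      have h2 : ∀ u : ℝ, |F (2*N+2) u * Real.cos (z*u)| ≤ |iteratedDeriv (2*N+2) A (u+a)| := by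
        intro u
        rw [abs_mul]
        exact mul_le_of_le_one_right (abs_nonneg _) (Real.abs_cos_le_one _)
      exact integral_mono (hintC (2*N+2)).abs (hFint (2*N+2)).abs h2
    set B : ℝ := |iteratedDeriv (2*N+1) A a| +
        ∫ u in Ioi (0:ℝ), |iteratedDeriv (2*N+2) A (u+a)| with hB
    have hz2 : (0:ℝ) < z^2 := by positivity
    have hkey : z^2 * |Ci (2*N)| ≤ B := by
      have h1 : z^2 * Ci (2*N) = -(iteratedDeriv (2*N+1) A a) - Ci (2*N+2) := by
        linarith [hr]
      have h2 : |z^2 * Ci (2*N)| = z^2 * |Ci (2*N)| := by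
        rw [abs_mul, abs_of_nonneg (sq_nonneg z)]
      rw [← h2, h1]
      calc |-(iteratedDeriv (2*N+1) A a) - Ci (2*N+2)|
          ≤ |iteratedDeriv (2*N+1) A a| + |Ci (2*N+2)| := by
            rw [sub_eq_add_neg]
            exact (abs_add_le _ _).trans (by rw [abs_neg, abs_neg])
        _ ≤ B := by rw [hB]; linarith [hCb]
    have hzN : (0:ℝ) < |z|^(2*N) := pow_pos (abs_pos.mpr hz) _
    have hRabs : |(-1:ℝ)^N / z^(2*N) * Ci (2*N)| = |Ci (2*N)| / |z|^(2*N) := by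
      rw [abs_mul, abs_div, abs_pow, abs_pow, abs_neg, abs_one, one_pow]
      ring
    rw [hRabs]
    have hCiN : |Ci (2*N)| ≤ B / z^2 := by
      rw [le_div_iff₀ hz2]; linarith [hkey]
    calc |Ci (2*N)| / |z|^(2*N) ≤ (B / z^2) / |z|^(2*N) := by gcongr
      _ = B / |z|^(2*N+2) := by
          rw [div_div]
          congr 1
          rw [← sq_abs z]
          ring
end

section
/- Let A solve A'' = id·A, smooth, with A and all derivatives vanishing at +∞ and integrable on half-lines. Fix a < 0 with A(a) = 0. Then for every z ≠ 0 and N ≥ 1, ∫_0^∞ A(u+a)·sin(zu) du = ∑_{s=0}^{N} (−1)^s z^{−(2s+1)} A^{(2s)}(a) + R_N(z) with |R_N(z)| ≤ C_N |z|^{−2N−3}. -/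
open Real Filter Set MeasureTheory Finset

set_option maxHeartbeats 1000000 in
theorem airy_sine_expansion
    (A : ℝ → ℝ) (hA : ContDiff ℝ (⊤ : ℕ∞) A)
    (hAiry : ∀ z, iteratedDeriv 2 A z = z * A z)
    (hdecay : ∀ n : ℕ, Filter.Tendsto (iteratedDeriv n A) atTop (nhds 0))
    (hint : ∀ (n : ℕ) (r : ℝ), IntegrableOn (iteratedDeriv n A) (Ici r))
    (a : ℝ) (ha : a < 0) (ha0 : A a = 0) :
    ∀ z : ℝ, z ≠ 0 → ∀ N : ℕ, 1 ≤ N →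
      ∃ R : ℝ,
        (∫ u in Ioi (0 : ℝ), A (u + a) * Real.sin (z * u)) =
          (∑ s ∈ Finset.range (N + 1), (-1 : ℝ) ^ s / z ^ (2 * s + 1) * iteratedDeriv (2 * s) A a)
            + R ∧
        |R| ≤ (|iteratedDeriv (2 * N + 2) A a| +
            ∫ u in Ioi (0 : ℝ), |iteratedDeriv (2 * N + 3) A (u + a)|) / |z| ^ (2 * N + 3) := by
  intro z hz N _
  have hzabs : (0:ℝ) < |z| := abs_pos.2 hz
  set f : ℕ → ℝ → ℝ := fun n u => iteratedDeriv n A (u + a) with hfdef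
  have hcontf : ∀ n, Continuous (f n) := fun n =>
    (hA.continuous_iteratedDeriv n (by exact_mod_cast le_top)).comp (continuous_id.add continuous_const)
  -- integrability of translated derivatives
  have hintf : ∀ n, IntegrableOn (f n) (Ioi 0) := by
    intro n
    have hres : MeasurePreserving (fun u : ℝ => u + a)
        (volume.restrict (Ioi (0:ℝ))) (volume.restrict (Ioi a)) := by
      have := (measurePreserving_add_right volume a).restrict_preimage
        (measurableSet_Ioi (a := a))
      simpa using this
    exact (hres.integrable_comp_emb
      (MeasurableEquiv.addRight a).measurableEmbedding (g := iteratedDeriv n A)).2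
      ((hint n a).mono_set Ioi_subset_Ici_self)
  -- integrability with a bounded factor
  have hmul : ∀ (k : ℕ) (c : ℝ → ℝ), Continuous c → (∀ u, |c u| ≤ 1) →
      IntegrableOn (fun u => f k u * c u) (Ioi 0) := by
    intro k c hc hcb
    refine Integrable.mono (hintf k) (((hcontf k).mul hc).aestronglyMeasurable) ?_
    filter_upwards with u
    simp only [Real.norm_eq_abs]
    calc |f k u * c u| = |f k u| * |c u| := abs_mul _ _
      _ ≤ |f k u| * 1 := mul_le_mul_of_nonneg_left (hcb u) (abs_nonneg _)
      _ = |f k u| := mul_one _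
  -- limits at infinity
  have htend : ∀ n, Tendsto (f n) atTop (nhds 0) := fun n =>
    (hdecay n).comp (tendsto_atTop_add_const_right atTop a tendsto_id)
  -- derivatives
  have hderiv : ∀ (n : ℕ) (x : ℝ), HasDerivAt (f n) (f (n+1) x) x := by
    intro n x
    have h1 : HasDerivAt (iteratedDeriv n A) (iteratedDeriv (n+1) A (x+a)) (x+a) := by
      rw [iteratedDeriv_succ]
      exact ((hA.differentiable_iteratedDeriv n (by exact_mod_cast ENat.coe_lt_top n)) (x+a)).hasDerivAt
    simpa [Function.comp_def, hfdef] using h1.comp x ((hasDerivAt_id x).add_const a)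
  -- the two families of integrals
  set S : ℕ → ℝ := fun n => ∫ u in Ioi (0:ℝ), f n u * Real.sin (z * u) with hSdef
  set C : ℕ → ℝ := fun n => ∫ u in Ioi (0:ℝ), f n u * Real.cos (z * u) with hCdef
  have hlin : ∀ u : ℝ, HasDerivAt (fun u : ℝ => z * u) z u := by
    intro u
    simpa using (hasDerivAt_id u).const_mul z
  have hsin : ∀ u : ℝ, HasDerivAt (fun u => Real.sin (z * u)) (Real.cos (z * u) * z) u := by
    intro u
    simpa [Function.comp_def] using (Real.hasDerivAt_sin (z * u)).comp u (hlin u)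
  have hcos : ∀ u : ℝ, HasDerivAt (fun u => Real.cos (z * u)) (-Real.sin (z * u) * z) u := by
    intro u
    simpa [Function.comp_def] using (Real.hasDerivAt_cos (z * u)).comp u (hlin u)
  have habs : ∀ (w : ℝ), |Real.sin w| ≤ 1 ∧ |Real.cos w| ≤ 1 := fun w =>
    ⟨Real.abs_sin_le_one w, Real.abs_cos_le_one w⟩
  have hSint : ∀ n, IntegrableOn (fun u => f n u * Real.sin (z * u)) (Ioi 0) := fun n =>
    hmul n _ (Real.continuous_sin.comp (continuous_const.mul continuous_id))
      (fun u => Real.abs_sin_le_one _)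
  have hCint : ∀ n, IntegrableOn (fun u => f n u * Real.cos (z * u)) (Ioi 0) := fun n =>
    hmul n _ (Real.continuous_cos.comp (continuous_const.mul continuous_id))
      (fun u => Real.abs_cos_le_one _)
  -- first integration by parts identity : z * S n = iteratedDeriv n A a + C (n+1)
  have IBP1 : ∀ n : ℕ, z * S n = iteratedDeriv n A a + C (n+1) := by
    intro n
    have hF : ∀ x : ℝ, HasDerivAt (fun u => f n u * Real.cos (z * u))
        (f (n+1) x * Real.cos (z * x) + f n x * (-Real.sin (z * x) * z)) x := by
      intro x
      exact (hderiv n x).mul (hcos x)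
    have hFint : IntegrableOn (fun x => f (n+1) x * Real.cos (z * x)
        + f n x * (-Real.sin (z * x) * z)) (Ioi 0) := by
      refine (hCint (n+1)).add ?_
      have h1 : IntegrableOn (fun x => -z * (f n x * Real.sin (z * x))) (Ioi 0) :=
        (hSint n).const_mul (-z)
      refine h1.congr_fun (fun x _ => by ring) measurableSet_Ioi
    have hFtend : Tendsto (fun u => f n u * Real.cos (z * u)) atTop (nhds 0) := by
      have h0 : Tendsto (fun u => |f n u|) atTop (nhds 0) := by
        simpa using (htend n).abs
      apply squeeze_zero_norm (fun u => ?_) h0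
      simp only [Real.norm_eq_abs]
      calc |f n u * Real.cos (z * u)| = |f n u| * |Real.cos (z * u)| := abs_mul _ _
        _ ≤ |f n u| * 1 := mul_le_mul_of_nonneg_left (Real.abs_cos_le_one _) (abs_nonneg _)
        _ = |f n u| := mul_one _
    have key := integral_Ioi_of_hasDerivAt_of_tendsto
      (f := fun u => f n u * Real.cos (z * u))
      (((hcontf n).mul (Real.continuous_cos.comp (continuous_const.mul continuous_id))).continuousWithinAt)
      (fun x _ => hF x) hFint hFtend
    have hsplit : (∫ x in Ioi (0:ℝ), (f (n+1) x * Real.cos (z * x)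
        + f n x * (-Real.sin (z * x) * z)))
        = C (n+1) + (-z) * S n := by
      have h1 : IntegrableOn (fun x => -z * (f n x * Real.sin (z * x))) (Ioi 0) :=
        (hSint n).const_mul (-z)
      rw [integral_add (hCint (n+1))
        (h1.congr_fun (fun x _ => by ring) measurableSet_Ioi), hCdef, hSdef]
      congr 1
      rw [← integral_const_mul]
      apply setIntegral_congr_fun measurableSet_Ioi
      intro x _
      ring
    rw [hsplit] at key
    have hkey : C (n+1) + -z * S n = -(iteratedDeriv n A a) := by
      rw [key]; simp [hfdef]
    linarith
  -- second integration by parts identity : z * C n = - S (n+1)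
  have IBP2 : ∀ n : ℕ, z * C n = - S (n+1) := by
    intro n
    have hF : ∀ x : ℝ, HasDerivAt (fun u => f n u * Real.sin (z * u))
        (f (n+1) x * Real.sin (z * x) + f n x * (Real.cos (z * x) * z)) x := by
      intro x
      exact (hderiv n x).mul (hsin x)
    have hFint : IntegrableOn (fun x => f (n+1) x * Real.sin (z * x)
        + f n x * (Real.cos (z * x) * z)) (Ioi 0) := by
      refine (hSint (n+1)).add ?_
      have h1 : IntegrableOn (fun x => z * (f n x * Real.cos (z * x))) (Ioi 0) :=
        (hCint n).const_mul z
      refine h1.congr_fun (fun x _ => by ring) measurableSet_Ioi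
    have hFtend : Tendsto (fun u => f n u * Real.sin (z * u)) atTop (nhds 0) := by
      have h0 : Tendsto (fun u => |f n u|) atTop (nhds 0) := by
        simpa using (htend n).abs
      apply squeeze_zero_norm (fun u => ?_) h0
      simp only [Real.norm_eq_abs]
      calc |f n u * Real.sin (z * u)| = |f n u| * |Real.sin (z * u)| := abs_mul _ _
        _ ≤ |f n u| * 1 := mul_le_mul_of_nonneg_left (Real.abs_sin_le_one _) (abs_nonneg _)
        _ = |f n u| := mul_one _
    have key := integral_Ioi_of_hasDerivAt_of_tendsto
      (f := fun u => f n u * Real.sin (z * u))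
      (((hcontf n).mul (Real.continuous_sin.comp (continuous_const.mul continuous_id))).continuousWithinAt)
      (fun x _ => hF x) hFint hFtend
    have hsplit : (∫ x in Ioi (0:ℝ), (f (n+1) x * Real.sin (z * x)
        + f n x * (Real.cos (z * x) * z)))
        = S (n+1) + z * C n := by
      have h1 : IntegrableOn (fun x => z * (f n x * Real.cos (z * x))) (Ioi 0) :=
        (hCint n).const_mul z
      rw [integral_add (hSint (n+1))
        (h1.congr_fun (fun x _ => by ring) measurableSet_Ioi), hSdef, hCdef]
      congr 1
      rw [← integral_const_mul]
      apply setIntegral_congr_fun measurableSet_Ioi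
      intro x _
      ring
    rw [hsplit] at key
    have hkey : S (n+1) + z * C n = 0 := by
      rw [key]; simp
    linarith
  -- recursion : S n = D n / z - S (n+2) / z^2
  have hrec : ∀ n : ℕ, S n = iteratedDeriv n A a / z - S (n+2) / z^2 := by
    intro n
    have h1 := IBP1 n
    have h2 := IBP2 (n+1)
    have h3 : z^2 * S n = z * iteratedDeriv n A a - S (n+2) := by
      calc z^2 * S n = z * (z * S n) := by ring
      _ = z * (iteratedDeriv n A a + C (n+1)) := by rw [h1]
      _ = z * iteratedDeriv n A a + z * C (n+1) := by ring
      _ = z * iteratedDeriv n A a - S (n+2) := by rw [h2]; ring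
    field_simp
    linear_combination h3
  -- expansion with remainder
  have hexp : ∀ M : ℕ, S 0 = (∑ s ∈ Finset.range (M + 1),
      (-1 : ℝ) ^ s / z ^ (2 * s + 1) * iteratedDeriv (2 * s) A a)
      + (-1 : ℝ) ^ (M+1) / z ^ (2*M+2) * S (2*M+2) := by
    intro M
    induction M with
    | zero =>
      have h := hrec 0
      norm_num [Finset.sum_range_one] at h ⊢
      rw [h]
      ring
    | succ M ih =>
      rw [Finset.sum_range_succ, ih]
      have h := hrec (2*M+2)
      have e1 : 2*M+2+2 = 2*(M+1)+2 := by ring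
      rw [e1] at h
      rw [h]
      have e2 : 2*(M+1) = 2*M+2 := by ring
      rw [e2]
      field_simp
      ring
  -- choose R
  refine ⟨(-1 : ℝ) ^ (N+1) / z ^ (2*N+2) * S (2*N+2), ?_, ?_⟩
  · have := hexp N
    rw [hSdef] at this
    simpa [hfdef] using this
  · -- the bound
    have hb1 : |C (2*N+3)| ≤ ∫ u in Ioi (0:ℝ), |iteratedDeriv (2*N+3) A (u + a)| := by
      have h1 : |C (2*N+3)| ≤ ∫ u in Ioi (0:ℝ), |f (2*N+3) u * Real.cos (z * u)| := by
        rw [hCdef]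
        simpa only [Real.norm_eq_abs] using norm_integral_le_integral_norm
          (f := fun u => f (2*N+3) u * Real.cos (z * u)) (μ := volume.restrict (Ioi (0:ℝ)))
      refine h1.trans ?_
      have h2 : ∀ u : ℝ, |f (2*N+3) u * Real.cos (z * u)| ≤ |f (2*N+3) u| := by
        intro u
        rw [abs_mul]
        calc |f (2*N+3) u| * |Real.cos (z*u)| ≤ |f (2*N+3) u| * 1 :=
          mul_le_mul_of_nonneg_left (Real.abs_cos_le_one _) (abs_nonneg _)
        _ = |f (2*N+3) u| := mul_one _
      have h3 := integral_mono (μ := volume.restrict (Ioi (0:ℝ)))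
        (hCint (2*N+3)).abs (hintf (2*N+3)).abs h2
      simpa [hfdef] using h3
    have hS2 : S (2*N+2) = (iteratedDeriv (2*N+2) A a + C (2*N+3)) / z := by
      have h := IBP1 (2*N+2)
      field_simp
      linear_combination h
    have hI0 : 0 ≤ ∫ u in Ioi (0:ℝ), |iteratedDeriv (2*N+3) A (u + a)| :=
      integral_nonneg (fun u => abs_nonneg _)
    set D : ℝ := iteratedDeriv (2*N+2) A a with hD
    set I : ℝ := ∫ u in Ioi (0:ℝ), |iteratedDeriv (2*N+3) A (u + a)| with hI
    have hSb : |S (2*N+2)| ≤ (|D| + I) / |z| := by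
      rw [hS2, abs_div]
      gcongr
      exact (abs_add_le _ _).trans (by linarith [hb1])
    have hRabs : |(-1:ℝ)^(N+1) / z^(2*N+2) * S (2*N+2)|
        = |S (2*N+2)| / |z|^(2*N+2) := by
      rw [abs_mul, abs_div, abs_pow, abs_pow, abs_neg, abs_one, one_pow]
      ring
    rw [hRabs]
    calc |S (2*N+2)| / |z|^(2*N+2) ≤ ((|D| + I) / |z|) / |z|^(2*N+2) := by
          gcongr
      _ = (|D| + I) / |z|^(2*N+3) := by
          rw [div_div]
          congr 1
          rw [show 2*N+3 = (2*N+2)+1 from rfl, pow_succ]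
          ring
end
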